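/- arXiv:2309.06509 — 3 statements merged into one kernel-verified Lean document; each statement's English description precedes it below -/
import Mathlib

section
/- Let 𝒢 be a GRN with associated PRN ℛ. A node τ ∈ V is a simple node of 𝒢 if and only if both (τ,R) and (τ,P) are simple nodes of ℛ. -/
open List Relation

/- In the PRN on `V × Bool`, the node `(v, false)` is the mRNA node `v^R`
   and `(v, true)` is the protein node `v^P`. -/

/-- Arrow relation of the PRN associated to a GRN with arrow relation `E`:
arrows `(v,R) → (v,P)` for every `v`, and `(u,P) → (v,R)` whenever `E u v`. -/
def prnAdj {V : Type*} (E : V → V → Prop) : V × Bool → V × Bool → Prop :=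
  fun a b =>
    (a.1 = b.1 ∧ a.2 = false ∧ b.2 = true) ∨
    (E a.1 b.1 ∧ a.2 = true ∧ b.2 = false)

/-- The lift of a path `σ₁ → ⋯ → σ_m` in the GRN to the path
`(σ₁,R) → (σ₁,P) → ⋯ → (σ_m,R) → (σ_m,P)` in the PRN. -/
def liftPath {V : Type*} (l : List V) : List (V × Bool) :=
  l.flatMap fun v => [(v, false), (v, true)]

/-- A simple path: a nonempty directed path visiting each node at most once. -/
def IsSimplePath {V : Type*} (E : V → V → Prop) (l : List V) : Prop :=
  l ≠ [] ∧ l.Chain' E ∧ l.Nodup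

/-- A simple path from `a` to `b`. -/
def IsSimplePathFrom {V : Type*} (E : V → V → Prop) (a b : V) (l : List V) : Prop :=
  IsSimplePath E l ∧ l.head? = some a ∧ l.getLast? = some b

/-- A node is simple if it lies on some simple path from the input to the output. -/
def IsSimpleNode {V : Type*} (E : V → V → Prop) (ι o v : V) : Prop :=
  ∃ l, IsSimplePathFrom E ι o l ∧ v ∈ l

/-- A node is super-simple if it lies on every simple path from the input to the output. -/
def IsSuperSimpleNode {V : Type*} (E : V → V → Prop) (ι o v : V) : Prop :=
  ∀ l, IsSimplePathFrom E ι o l → v ∈ l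

/-- A node is appendage if it lies on no simple path from the input to the output. -/
def IsAppendageNode {V : Type*} (E : V → V → Prop) (ι o v : V) : Prop :=
  ¬ IsSimpleNode E ι o v

/-- An appendage path from `a` to `b`: a simple path from `a` to `b` each of whose
nodes, except possibly `a` and `b`, is an appendage node. -/
def IsAppendagePath {V : Type*} (E : V → V → Prop) (ι o a b : V) (l : List V) : Prop :=
  IsSimplePathFrom E a b l ∧ ∀ v ∈ l, v ≠ a → v ≠ b → IsAppendageNode E ι o v

/-- A directed cycle: a nonempty closed directed walk visiting each of its nodes
exactly once (a self-loop is a cycle of length one). -/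
def IsCycle {V : Type*} (E : V → V → Prop) (c : List V) : Prop :=
  c ≠ [] ∧ c.Chain' E ∧ c.Nodup ∧
    ∃ a b, c.head? = some a ∧ c.getLast? = some b ∧ E b a

/-- Arrow relation of the appendage subnetwork: the induced subgraph on appendage nodes. -/
def appendageAdj {V : Type*} (E : V → V → Prop) (ι o : V) : V → V → Prop :=
  fun a b => E a b ∧ IsAppendageNode E ι o a ∧ IsAppendageNode E ι o b

/-- Two appendage nodes are path-equivalent if each is reachable from the other by a
directed path lying entirely within the appendage subnetwork. -/
def PathEquiv {V : Type*} (E : V → V → Prop) (ι o a b : V) : Prop :=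
  Relation.ReflTransGen (appendageAdj E ι o) a b ∧
  Relation.ReflTransGen (appendageAdj E ι o) b a

/-- A node `x` is between `a` and `b` if some input-to-output simple path visits
`a`, `x`, `b` in that order. -/
def Between {V : Type*} (E : V → V → Prop) (ι o a x b : V) : Prop :=
  ∃ l, IsSimplePathFrom E ι o l ∧ [a, x, b].Sublist l

/-! In the PRN the only successor of `(v,R)` is `(v,P)`, and the successors of `(u,P)` are
the `(v,R)` with `u → v`. Hence a walk from an `R`-node to a `P`-node alternates and is the
lift `(σ₁,R) (σ₁,P) ⋯ (σₘ,R) (σₘ,P)` of a walk `σ₁ ⋯ σₘ` of the GRN, and lifting preserves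
and reflects simplicity and endpoints. So the `ι^R o^P`-simple paths are exactly the lifts of
the `ιo`-simple paths, and a lift contains `(τ,R)`, equivalently `(τ,P)`, iff the path
contains `τ`. -/

namespace GRN

variable {V : Type*} {E : V → V → Prop}

@[simp]
theorem liftPath_nil : liftPath ([] : List V) = [] := rfl

@[simp]
theorem liftPath_cons (v : V) (l : List V) :
    liftPath (v :: l) = (v, false) :: (v, true) :: liftPath l := rfl

@[simp]
theorem mem_liftPath {l : List V} {v : V} {b : Bool} : (v, b) ∈ liftPath l ↔ v ∈ l := by
  cases b <;> simp [liftPath]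

theorem nodup_liftPath_iff {l : List V} : (liftPath l).Nodup ↔ l.Nodup := by
  induction l with
  | nil => simp
  | cons v t ih => simp [ih]

theorem head?_liftPath (l : List V) : (liftPath l).head? = l.head?.map (·, false) := by
  cases l <;> rfl

theorem getLast?_liftPath : ∀ l : List V, (liftPath l).getLast? = l.getLast?.map (·, true)
  | [] => rfl
  | [_] => rfl
  | v :: w :: t => by
    simpa only [liftPath_cons, getLast?_cons_cons] using getLast?_liftPath (w :: t)

@[simp]
theorem liftPath_eq_nil_iff {l : List V} : liftPath l = [] ↔ l = [] := by
  cases l <;> simp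

theorem head?_liftPath_eq_some {l : List V} {a : V} :
    (liftPath l).head? = some (a, false) ↔ l.head? = some a := by
  simp [head?_liftPath]

theorem getLast?_liftPath_eq_some {l : List V} {b : V} :
    (liftPath l).getLast? = some (b, true) ↔ l.getLast? = some b := by
  simp [getLast?_liftPath]

@[simp]
theorem prnAdj_false_iff {v : V} {y : V × Bool} : prnAdj E (v, false) y ↔ y = (v, true) := by
  obtain ⟨w, b⟩ := y
  cases b <;> simp [prnAdj, eq_comm]

@[simp]
theorem prnAdj_true_iff {u : V} {y : V × Bool} :
    prnAdj E (u, true) y ↔ E u y.1 ∧ y.2 = false := by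
  simp [prnAdj]

theorem isChain_liftPath_iff : ∀ {l : List V}, (liftPath l).IsChain (prnAdj E) ↔ l.IsChain E
  | [] => by simp
  | [v] => by simp
  | v :: w :: t => by
    rw [liftPath_cons v, isChain_cons_cons, liftPath_cons, isChain_cons_cons, ← liftPath_cons,
      isChain_liftPath_iff, isChain_cons_cons (l := t)]
    simp

theorem exists_eq_liftPath : ∀ {L : List (V × Bool)}, L.IsChain (prnAdj E) →
    (∀ x ∈ L.head?, x.2 = false) → (∀ x ∈ L.getLast?, x.2 = true) →
    ∃ l, L = liftPath l
  | [], _, _, _ => ⟨[], rfl⟩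
  | [(v, b)], _, hhead, hlast => by simp_all
  | (v, b) :: y :: L, hchain, hhead, hlast => by
    obtain rfl : b = false := hhead _ rfl
    rw [isChain_cons_cons, prnAdj_false_iff] at hchain
    obtain ⟨rfl, hchain⟩ := hchain
    have hhead' : ∀ x ∈ L.head?, x.2 = false := fun x hx =>
      (prnAdj_true_iff.mp ((isChain_cons.mp hchain).1 x hx)).2
    have hlast' : ∀ x ∈ L.getLast?, x.2 = true := by
      cases L with
      | nil => simp
      | cons z L => simpa [getLast?_cons_cons] using hlast
    obtain ⟨l, rfl⟩ := exists_eq_liftPath hchain.of_cons hhead' hlast'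
    exact ⟨v :: l, rfl⟩

theorem isSimplePathFrom_liftPath_iff {a b : V} {l : List V} :
    IsSimplePathFrom (prnAdj E) (a, false) (b, true) (liftPath l) ↔ IsSimplePathFrom E a b l :=
  ⟨fun ⟨⟨hne, hchain, hnodup⟩, hhead, hlast⟩ =>
    ⟨⟨liftPath_eq_nil_iff.not.mp hne, isChain_liftPath_iff.mp hchain,
        nodup_liftPath_iff.mp hnodup⟩,
      head?_liftPath_eq_some.mp hhead, getLast?_liftPath_eq_some.mp hlast⟩,
   fun ⟨⟨hne, hchain, hnodup⟩, hhead, hlast⟩ =>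
    ⟨⟨liftPath_eq_nil_iff.not.mpr hne, isChain_liftPath_iff.mpr hchain,
        nodup_liftPath_iff.mpr hnodup⟩,
      head?_liftPath_eq_some.mpr hhead, getLast?_liftPath_eq_some.mpr hlast⟩⟩

theorem isSimplePathFrom_prnAdj_iff {a b : V} {L : List (V × Bool)} :
    IsSimplePathFrom (prnAdj E) (a, false) (b, true) L ↔
      ∃ l, IsSimplePathFrom E a b l ∧ L = liftPath l := by
  refine ⟨fun hL => ?_, ?_⟩
  · obtain ⟨l, rfl⟩ := exists_eq_liftPath hL.1.2.1 (by simp [hL.2.1]) (by simp [hL.2.2])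
    exact ⟨l, isSimplePathFrom_liftPath_iff.mp hL, rfl⟩
  · rintro ⟨l, hl, rfl⟩
    exact isSimplePathFrom_liftPath_iff.mpr hl

theorem isSimpleNode_prnAdj_iff {ι o τ : V} {b : Bool} :
    IsSimpleNode (prnAdj E) (ι, false) (o, true) (τ, b) ↔ IsSimpleNode E ι o τ := by
  simp only [IsSimpleNode, isSimplePathFrom_prnAdj_iff]
  constructor
  · rintro ⟨_, ⟨l, hl, rfl⟩, hτ⟩
    exact ⟨l, hl, mem_liftPath.mp hτ⟩
  · rintro ⟨l, hl, hτ⟩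
    exact ⟨_, ⟨l, hl, rfl⟩, mem_liftPath.mpr hτ⟩

end GRN

open GRN

theorem stmt_4_general {V : Type*} (E : V → V → Prop) (ι o τ : V) :
    IsSimpleNode E ι o τ ↔
      (IsSimpleNode (prnAdj E) (ι, false) (o, true) (τ, false) ∧
       IsSimpleNode (prnAdj E) (ι, false) (o, true) (τ, true)) := by
  rw [isSimpleNode_prnAdj_iff, isSimpleNode_prnAdj_iff, and_self]

/-- A node `τ` is a simple node of the GRN if and only if both
`(τ,R)` and `(τ,P)` are simple nodes of the PRN. -/
theorem stmt_4 {V : Type*} [Fintype V] (E : V → V → Prop) (ι o τ : V) :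
    IsSimpleNode E ι o τ ↔
      (IsSimpleNode (prnAdj E) (ι, false) (o, true) (τ, false) ∧
       IsSimpleNode (prnAdj E) (ι, false) (o, true) (τ, true)) :=
  stmt_4_general E ι o τ
end

section
/- Let 𝒢 be a GRN with associated PRN ℛ. A node τ ∈ V is a super-simple node of 𝒢 if and only if both (τ,R) and (τ,P) are super-simple nodes of ℛ. -/
/-!
Every PRN path from an mRNA node `(a,R)` to a protein node `(b,P)` alternates
`(v,R) → (v,P) → (w,R) → ⋯`, so it is the lift of a GRN path from `a` to `b`; lifting is a
bijection between `ιo`-simple paths and `ι^R o^P`-simple paths, and `(τ,R)` and `(τ,P)`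
lie on a lift exactly when `τ` lies on the path itself.
-/

open List Relation

section LiftPath

variable {V : Type*}

@[simp] lemma liftPath_nil : liftPath ([] : List V) = [] := rfl

@[simp] lemma liftPath_cons (v : V) (l : List V) :
    liftPath (v :: l) = (v, false) :: (v, true) :: liftPath l := rfl

@[simp] lemma liftPath_eq_nil_iff {l : List V} : liftPath l = [] ↔ l = [] := by
  cases l <;> simp

@[simp] lemma mem_liftPath {v : V} {b : Bool} {l : List V} : (v, b) ∈ liftPath l ↔ v ∈ l := by
  induction l with
  | nil => simp
  | cons u l ih => cases b <;> simp [ih, Prod.ext_iff]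

@[simp] lemma nodup_liftPath {l : List V} : (liftPath l).Nodup ↔ l.Nodup := by
  induction l with
  | nil => simp
  | cons u l ih => simp [ih, Prod.ext_iff]

lemma head?_liftPath (l : List V) :
    (liftPath l).head? = l.head?.map fun v => (v, false) := by
  cases l <;> simp

lemma getLast?_liftPath (l : List V) :
    (liftPath l).getLast? = l.getLast?.map fun v => (v, true) := by
  induction l with
  | nil => rfl
  | cons u l ih => cases l <;> simp_all [List.getLast?_cons_cons]

variable (E : V → V → Prop)

lemma isChain_prnAdj_liftPath_iff {l : List V} :
    (liftPath l).IsChain (prnAdj E) ↔ l.IsChain E := by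
  induction l with
  | nil => simp
  | cons u l ih =>
    cases l with
    | nil => simp [prnAdj]
    | cons w l =>
      simp only [liftPath_cons, List.isChain_cons_cons] at ih ⊢
      simp_all [prnAdj]

lemma exists_eq_liftPath_of_isChain_prnAdj :
    ∀ {m : List (V × Bool)} {a b : V}, m.IsChain (prnAdj E) →
      m.head? = some (a, false) → m.getLast? = some (b, true) → ∃ l, m = liftPath l
  | [], _, _, _, hh, _ => by simp at hh
  | [x], _, _, _, hh, hl => by simp_all
  | x :: y :: rest, a, b, hc, hh, hl => by
    simp only [head?_cons, Option.some.injEq] at hh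
    subst hh
    rw [List.isChain_cons_cons] at hc
    obtain ⟨hxy, hc⟩ := hc
    obtain rfl : y = (a, true) := by
      rcases hxy with ⟨h₁, -, h₂⟩ | ⟨-, h, -⟩
      · exact Prod.ext h₁.symm h₂
      · simp at h
    cases rest with
    | nil => exact ⟨[a], rfl⟩
    | cons z rest =>
      rw [List.isChain_cons_cons] at hc
      obtain ⟨hyz, hc⟩ := hc
      have hz : z = (z.1, false) := by
        rcases hyz with ⟨-, h, -⟩ | ⟨-, -, h⟩
        · simp at h
        · exact Prod.ext rfl h
      rw [List.getLast?_cons_cons, List.getLast?_cons_cons] at hl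
      obtain ⟨l, hl⟩ := exists_eq_liftPath_of_isChain_prnAdj hc (by rw [head?_cons, ← hz]) hl
      exact ⟨a :: l, by simp [hl]⟩

lemma isSimplePathFrom_prnAdj_liftPath_iff {a b : V} {l : List V} :
    IsSimplePathFrom (prnAdj E) (a, false) (b, true) (liftPath l) ↔ IsSimplePathFrom E a b l := by
  simp only [IsSimplePathFrom, IsSimplePath, ne_eq, liftPath_eq_nil_iff, nodup_liftPath,
    head?_liftPath, getLast?_liftPath, Option.map_eq_some_iff, Prod.mk.injEq, and_true,
    exists_eq_right]
  exact and_congr_left' (and_congr_right' (and_congr_left' (isChain_prnAdj_liftPath_iff E)))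

theorem isSuperSimpleNode_prnAdj_iff (ι o τ : V) (b : Bool) :
    IsSuperSimpleNode (prnAdj E) (ι, false) (o, true) (τ, b) ↔ IsSuperSimpleNode E ι o τ := by
  constructor
  · intro h l hl
    exact mem_liftPath.1 (h _ ((isSimplePathFrom_prnAdj_liftPath_iff E).2 hl))
  · intro h m hm
    obtain ⟨l, rfl⟩ := exists_eq_liftPath_of_isChain_prnAdj E hm.1.2.1 hm.2.1 hm.2.2
    exact mem_liftPath.2 (h l ((isSimplePathFrom_prnAdj_liftPath_iff E).1 hm))

end LiftPath

theorem stmt_5_general {V : Type*} (E : V → V → Prop) (ι o τ : V) :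
    IsSuperSimpleNode E ι o τ ↔
      (IsSuperSimpleNode (prnAdj E) (ι, false) (o, true) (τ, false) ∧
       IsSuperSimpleNode (prnAdj E) (ι, false) (o, true) (τ, true)) := by
  rw [isSuperSimpleNode_prnAdj_iff, isSuperSimpleNode_prnAdj_iff, and_self]

/-- A node `τ` is a super-simple node of the GRN if and only if both
`(τ,R)` and `(τ,P)` are super-simple nodes of the PRN. -/
theorem stmt_5 {V : Type*} [Fintype V] (E : V → V → Prop) (ι o τ : V) :
    IsSuperSimpleNode E ι o τ ↔
      (IsSuperSimpleNode (prnAdj E) (ι, false) (o, true) (τ, false) ∧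
       IsSuperSimpleNode (prnAdj E) (ι, false) (o, true) (τ, true)) :=
  stmt_5_general E ι o τ
end

section
/- Let 𝒢 be a GRN with associated PRN ℛ. Then 𝒢 is a core network with respect to ι and o (every node of 𝒢 lies on a directed path from ι and on a directed path to o) if and only if ℛ is a core network with respect to (ι,R) and (o,P) (every node of ℛ lies on a directed path from (ι,R) and on a directed path to (o,P)). -/
open List Relation

lemma prn_proj {V : Type*} {E : V → V → Prop} {a b : V × Bool}
    (h : Relation.ReflTransGen (prnAdj E) a b) : Relation.ReflTransGen E a.1 b.1 := by
  induction h with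
  | refl => exact .refl
  | tail _ hstep ih =>
    rcases hstep with ⟨h1, _⟩ | ⟨h1, _⟩
    · rwa [← h1]
    · exact ih.tail h1

lemma prn_lift {V : Type*} {E : V → V → Prop} {u v : V}
    (h : Relation.ReflTransGen E u v) :
    Relation.ReflTransGen (prnAdj E) (u, false) (v, false) := by
  induction h with
  | refl => exact .refl
  | @tail b c _ hstep ih =>
    exact (ih.tail (show prnAdj E (b, false) (b, true) from Or.inl ⟨rfl, rfl, rfl⟩)).tail
      (show prnAdj E (b, true) (c, false) from Or.inr ⟨hstep, rfl, rfl⟩)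

lemma prn_lift_true {V : Type*} {E : V → V → Prop} {u v : V}
    (h : Relation.ReflTransGen E u v) :
    Relation.ReflTransGen (prnAdj E) (u, true) (v, true) := by
  induction h using Relation.ReflTransGen.head_induction_on with
  | refl => exact .refl
  | @head a b hstep _ ih =>
    exact ((Relation.ReflTransGen.single
        (show prnAdj E (a, true) (b, false) from Or.inr ⟨hstep, rfl, rfl⟩)).tail
        (show prnAdj E (b, false) (b, true) from Or.inl ⟨rfl, rfl, rfl⟩)).trans ih

/-- The GRN is a core network with respect to `ι` and `o` if and only if
the PRN is a core network with respect to `(ι,R)` and `(o,P)`. -/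
theorem stmt_17 {V : Type*} [Fintype V] (E : V → V → Prop) (ι o : V) :
    (∀ v : V, Relation.ReflTransGen E ι v ∧ Relation.ReflTransGen E v o) ↔
      (∀ x : V × Bool, Relation.ReflTransGen (prnAdj E) (ι, false) x ∧
        Relation.ReflTransGen (prnAdj E) x (o, true)) := by
  constructor
  · intro h x
    obtain ⟨h1, h2⟩ := h x.1
    constructor
    · rcases x with ⟨v, _ | _⟩
      · exact prn_lift h1
      · exact (prn_lift h1).tail (Or.inl ⟨rfl, rfl, rfl⟩)
    · rcases x with ⟨v, _ | _⟩
      · exact (prn_lift h2).tail (Or.inl ⟨rfl, rfl, rfl⟩)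
      · exact prn_lift_true h2
  · intro h v
    obtain ⟨h1, h2⟩ := h (v, false)
    exact ⟨prn_proj h1, prn_proj h2⟩
end
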